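/- arXiv:0807.2565 — 4 statements merged into one kernel-verified Lean document; each statement's English description precedes it below -/
import Mathlib

section
/- Let m ≥ 1, n = 2m, and let f, r, p : ℝ → ℂ be arbitrary functions. Then K_n · 𝒞_n(r) · 𝒞_n(f) · 𝒞_n(p) · K_nᵀ = 𝒞_m(ĝ), where ĝ : ℝ → ℂ is defined by ĝ(x) = (1/2)·( r(x/2)·f(x/2)·p(x/2) + r(x/2+π)·f(x/2+π)·p(x/2+π) ). (This is the one-dimensional Galerkin coarse-grid formula: the coarse matrix R·A·P of a circulant matrix generated by f, with restriction K_n·𝒞_n(r) and prolongation 𝒞_n(p)·K_nᵀ, is again circulant and is generated by ĝ.) -/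
/-!
With `ω = e^{2πi/n}` and `F = (ω^{sl})`, `𝒞_n(g) = F · diag(g(2πl/n)) · F⁻¹`, because
`(ω^{-ls})_{l,s} = n F⁻¹` by the orthogonality of the characters of `ℤ/n`. Hence circulants
multiply by multiplying their symbols, and `𝒞_n(r) 𝒞_n(f) 𝒞_n(p)` has symbol `rfp`.
Keeping the even rows and columns of a circulant of size `2m` squares `ω` into `e^{2πi/m}`, and
since `ω^{2m} = 1` the frequencies `l` and `l + m` then carry the same Fourier mode; so the new
symbol at `x = 2πl/m` is the average of the old one at `2πl/2m = x/2` and `2π(l + m)/2m = x/2 + π`.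
-/

open Matrix

/-- The circulant matrix of size `n × n` generated by the symbol `g`:
`(𝒞_n(g))_{s,t} = (1/n) ∑_{l=0}^{n−1} g(2πl/n)·exp(2πi·l·(s−t)/n)`. -/
noncomputable def circulantOf (n : ℕ) (g : ℝ → ℂ) : Matrix (Fin n) (Fin n) ℂ :=
  fun s t => (1 / (n : ℂ)) * ∑ l : Fin n,
    g (2 * Real.pi * (l : ℕ) / n) *
      Complex.exp (2 * Real.pi * Complex.I * (l : ℕ) * (((s : ℕ) : ℤ) - ((t : ℕ) : ℤ)) / n)

/-- The down-sampling (cutting) matrix `K_n` of size `m × n` with `n = 2m`: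
`(K_n)_{j,k} = 1` if `k = 2j`, `0` otherwise. -/
def cuttingMatrix (m : ℕ) : Matrix (Fin m) (Fin (2 * m)) ℂ :=
  fun j k => if (k : ℕ) = 2 * (j : ℕ) then 1 else 0

open Finset

def evenIndex (m : ℕ) (j : Fin m) : Fin (2 * m) := ⟨2 * j, by omega⟩

namespace Matrix

variable {K : Type*} [Field K] {n : ℕ}

def circulantOfSymbol (ζ : K) (c : Fin n → K) : Matrix (Fin n) (Fin n) K :=
  (n : K)⁻¹ • (vandermonde (fun i : Fin n => ζ ^ (i : ℕ)) * diagonal c *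
    vandermonde (fun i : Fin n => ζ⁻¹ ^ (i : ℕ)))

theorem circulantOfSymbol_apply (ζ : K) (c : Fin n → K) (s t : Fin n) :
    circulantOfSymbol ζ c s t =
      (n : K)⁻¹ * ∑ l : Fin n, ζ ^ ((s : ℕ) * l) * c l * ζ⁻¹ ^ ((l : ℕ) * t) := by
  simp only [circulantOfSymbol, smul_apply, smul_eq_mul, mul_apply, vandermonde_apply,
    diagonal_apply, mul_ite, mul_zero, sum_ite_eq', mem_univ, if_true, ← pow_mul]

theorem vandermonde_inv_pow_mul_vandermonde_pow {ζ : K} (hζ : IsPrimitiveRoot ζ n) :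
    vandermonde (fun i : Fin n => ζ⁻¹ ^ (i : ℕ)) * vandermonde (fun i : Fin n => ζ ^ (i : ℕ)) =
      (n : K) • 1 := by
  ext l l'
  have hζ0 : ζ ≠ 0 := hζ.ne_zero (Fin.pos l).ne'
  set z := ζ⁻¹ ^ (l : ℕ) * ζ ^ (l' : ℕ) with hz
  have hterm (u : Fin n) : (ζ⁻¹ ^ (l : ℕ)) ^ (u : ℕ) * (ζ ^ (u : ℕ)) ^ (l' : ℕ) = z ^ (u : ℕ) := by
    rw [mul_pow, ← pow_mul, ← pow_mul, ← pow_mul, mul_comm (u : ℕ)]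
  simp only [mul_apply, vandermonde_apply, hterm, smul_apply, one_apply, smul_eq_mul]
  rw [Fin.sum_univ_eq_sum_range (z ^ ·)]
  by_cases hll : l = l'
  · subst hll
    simp [hz, inv_pow, hζ0]
  · have hz1 : z ≠ 1 := by
      rw [hz, inv_pow, Ne, inv_mul_eq_one₀ (pow_ne_zero _ hζ0)]
      exact fun h => hll (Fin.ext (hζ.pow_inj l.isLt l'.isLt h))
    have hzn : z ^ n = 1 := by
      rw [hz, mul_pow, ← pow_mul, ← pow_mul, mul_comm (l : ℕ), mul_comm (l' : ℕ), pow_mul, pow_mul,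
        inv_pow, hζ.pow_eq_one]
      simp
    simp [geom_sum_eq hz1, hzn, hll]

theorem circulantOfSymbol_mul [NeZero n] {ζ : K} (hζ : IsPrimitiveRoot ζ n) (c d : Fin n → K) :
    circulantOfSymbol ζ c * circulantOfSymbol ζ d = circulantOfSymbol ζ (fun l => c l * d l) := by
  have : NeZero (n : K) := hζ.neZero'
  set V := vandermonde (fun i : Fin n => ζ ^ (i : ℕ))
  set W := vandermonde (fun i : Fin n => ζ⁻¹ ^ (i : ℕ))
  have hWV : W * V = (n : K) • 1 := vandermonde_inv_pow_mul_vandermonde_pow hζ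
  calc circulantOfSymbol ζ c * circulantOfSymbol ζ d
      = ((n : K)⁻¹ * (n : K)⁻¹) • (V * diagonal c * (W * V) * diagonal d * W) := by
        simp only [circulantOfSymbol, Matrix.smul_mul, Matrix.mul_smul, smul_smul, Matrix.mul_assoc]
        rfl
    _ = circulantOfSymbol ζ (fun l => c l * d l) := by
        rw [hWV, circulantOfSymbol, ← diagonal_mul_diagonal]
        simp only [Matrix.mul_smul, Matrix.smul_mul, Matrix.mul_one, smul_smul, Matrix.mul_assoc]
        rw [inv_mul_cancel_right₀ (NeZero.ne _)]

theorem circulantOfSymbol_submatrix_evenIndex {m : ℕ} {ζ : K} (hζ : ζ ^ (2 * m) = 1) (c : ℕ → K) :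
    (circulantOfSymbol ζ (fun l : Fin (2 * m) => c l)).submatrix (evenIndex m) (evenIndex m) =
      circulantOfSymbol (ζ ^ 2) (fun l : Fin m => (c l + c (l + m)) / 2) := by
  have hper (a b : ℕ) : ζ ^ (a + 2 * m * b) = ζ ^ a := by
    rw [pow_add, pow_mul, hζ, one_pow, mul_one]
  have hper' (a b : ℕ) : ζ⁻¹ ^ (a + 2 * m * b) = ζ⁻¹ ^ a := by rw [inv_pow, inv_pow, hper]
  ext j k
  rw [submatrix_apply, circulantOfSymbol_apply, circulantOfSymbol_apply]
  simp only [evenIndex]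
  rw [Fin.sum_univ_eq_sum_range (fun l => ζ ^ (2 * (j : ℕ) * l) * c l * ζ⁻¹ ^ (l * (2 * k))),
    Fin.sum_univ_eq_sum_range (fun l => (ζ ^ 2) ^ ((j : ℕ) * l) * ((c l + c (l + m)) / 2) *
      (ζ ^ 2)⁻¹ ^ (l * k)), two_mul m, sum_range_add, ← sum_add_distrib, mul_sum, mul_sum]
  refine sum_congr rfl fun l _ => ?_
  rw [show 2 * (j : ℕ) * (m + l) = 2 * j * l + 2 * m * j by ring, hper,
    show (m + l) * (2 * (k : ℕ)) = l * (2 * k) + 2 * m * k by ring, hper', ← inv_pow, ← pow_mul,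
    ← pow_mul, add_comm m l]
  push_cast
  ring

end Matrix

theorem cuttingMatrix_eq_submatrix_one (m : ℕ) :
    cuttingMatrix m =
      (1 : Matrix (Fin (2 * m)) (Fin (2 * m)) ℂ).submatrix (evenIndex m) (Equiv.refl _) := by
  ext j k
  simp [cuttingMatrix, one_apply, evenIndex, Fin.ext_iff, eq_comm]

theorem cuttingMatrix_mul_mul_transpose (m : ℕ) (M : Matrix (Fin (2 * m)) (Fin (2 * m)) ℂ) :
    cuttingMatrix m * M * (cuttingMatrix m)ᵀ = M.submatrix (evenIndex m) (evenIndex m) := by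
  rw [cuttingMatrix_eq_submatrix_one, transpose_submatrix, transpose_one, one_submatrix_mul,
    mul_submatrix_one, submatrix_submatrix]
  rfl

theorem circulantOf_eq_circulantOfSymbol (n : ℕ) (g : ℝ → ℂ) :
    circulantOf n g = circulantOfSymbol (Complex.exp (2 * Real.pi * Complex.I / n))
      (fun l : Fin n => g (2 * Real.pi * (l : ℕ) / n)) := by
  ext s t
  rw [circulantOfSymbol_apply, circulantOf, one_div]
  congr 1
  refine sum_congr rfl fun l _ => ?_
  rw [← Complex.exp_neg, ← Complex.exp_nat_mul, ← Complex.exp_nat_mul,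
    mul_right_comm (Complex.exp _) (g _), ← Complex.exp_add, mul_comm (g _)]
  congr 2
  push_cast
  ring

/-- The one-dimensional Galerkin coarse-grid formula: for `n = 2m`,
`K_n · 𝒞_n(r) · 𝒞_n(f) · 𝒞_n(p) · K_nᵀ = 𝒞_m(ĝ)` where
`ĝ(x) = (1/2)·(r(x/2)f(x/2)p(x/2) + r(x/2+π)f(x/2+π)p(x/2+π))`. -/
theorem coarse_grid_circulant (m : ℕ) (hm : 1 ≤ m) (f r p : ℝ → ℂ) (ghat : ℝ → ℂ)
    (hghat : ∀ x : ℝ, ghat x = (1 / 2) *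
      (r (x / 2) * f (x / 2) * p (x / 2) +
        r (x / 2 + Real.pi) * f (x / 2 + Real.pi) * p (x / 2 + Real.pi))) :
    cuttingMatrix m * circulantOf (2 * m) r * circulantOf (2 * m) f *
      circulantOf (2 * m) p * (cuttingMatrix m)ᵀ = circulantOf m ghat := by
  set ω := Complex.exp (2 * Real.pi * Complex.I / (2 * m : ℕ))
  have : NeZero (2 * m) := ⟨by omega⟩
  have hω : IsPrimitiveRoot ω (2 * m) := Complex.isPrimitiveRoot_exp _ (NeZero.ne _)
  have hω_sq : ω ^ 2 = Complex.exp (2 * Real.pi * Complex.I / m) := by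
    rw [← Complex.exp_nat_mul]
    push_cast
    ring_nf
  rw [Matrix.mul_assoc (cuttingMatrix m), Matrix.mul_assoc (cuttingMatrix m)]
  simp only [circulantOf_eq_circulantOfSymbol]
  rw [circulantOfSymbol_mul hω, circulantOfSymbol_mul hω, cuttingMatrix_mul_mul_transpose,
    circulantOfSymbol_submatrix_evenIndex (c := fun l : ℕ =>
      r (2 * Real.pi * l / (2 * m : ℕ)) * f (2 * Real.pi * l / (2 * m : ℕ)) *
        p (2 * Real.pi * l / (2 * m : ℕ))) hω.pow_eq_one, hω_sq]
  congr 1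
  funext l
  rw [hghat, div_eq_inv_mul, one_div]
  congr 3 <;> push_cast <;> field_simp
end

section
/- Let f, q : ℝ → ℝ be continuous and 2π-periodic with f(x) ≥ 0 and q(x) ≥ 0 for all x, let x⁰ ∈ ℝ and let m ≥ 1. Assume: (i) there exist c₁, c₂, δ > 0 such that c₁·|t|^m ≤ f(x⁰+t) ≤ c₂·|t|^m for all |t| < δ (so f has a zero of exact order m at x⁰); (ii) q(x⁰) > 0; (iii) there exists C > 0 such that q(x⁰+π+t) ≤ C·|t|^m for all |t| < δ. Define ĝ(x) = (1/2)·( q(x/2)·f(x/2) + q(x/2+π)·f(x/2+π) ). Then there exist c₁', c₂', δ' > 0 such that c₁'·|t|^m ≤ ĝ(2x⁰ + t) ≤ c₂'·|t|^m for all |t| < δ'. (That is, the coarse symbol ĝ has a zero at y⁰ = 2x⁰ (mod 2π) of exactly the same order m as the zero x⁰ of f.) -/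
/-!
Write `s = t / 2`, so that `ĝ(2x⁰ + t) = ½ (A s + B s)` with `A s = q(x⁰+s) f(x⁰+s)` and
`B s = q(x⁰+π+s) f(x⁰+π+s)`. Near `s = 0` the factor `q(x⁰+s)` stays close to `q(x⁰) > 0`,
so `A s ≍ |s|^m`, while `B s = O(|s|^m)` because `q` vanishes to order `m` at the mirror point
and `f` is bounded there. Both terms are nonnegative, so their sum is still `≍ |s|^m`, and
the substitution `s = t / 2` only changes the constants.
-/

open Filter Topology

namespace Asymptotics

variable {α : Type*} {l : Filter α}

theorem _root_.Filter.Tendsto.isTheta_one {E : Type*} [NormedAddCommGroup E] {f : α → E} {y : E} (h : Tendsto f l (𝓝 y))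
    (hy : y ≠ 0) : f =Θ[l] fun _ ↦ (1 : ℝ) := by
  refine ⟨h.isBigO_one ℝ, (isBigO_const_left_iff_pos_le_norm one_ne_zero).2 ?_⟩
  have hlt : ‖y‖ / 2 < ‖y‖ := half_lt_self (norm_pos_iff.2 hy)
  exact ⟨‖y‖ / 2, by positivity, (h.norm.eventually (lt_mem_nhds hlt)).mono fun _ ↦ le_of_lt⟩

theorem IsTheta.add_isBigO_of_nonneg {u v g : α → ℝ} (hu : ∀ x, 0 ≤ u x) (hv : ∀ x, 0 ≤ v x)
    (hug : u =Θ[l] g) (hvg : v =O[l] g) : (u + v) =Θ[l] g := by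
  have hle : u =O[l] (u + v) := isBigO_of_le l fun x ↦ by
    simp only [Pi.add_apply, Real.norm_of_nonneg (hu x),
      Real.norm_of_nonneg (add_nonneg (hu x) (hv x))]
    linarith [hv x]
  exact ⟨hug.1.add hvg, hug.2.trans hle⟩

theorem isTheta_nhds_zero_iff {f g : ℝ → ℝ} (hf : ∀ t, 0 ≤ f t) (hg : ∀ t, 0 ≤ g t) :
    f =Θ[𝓝 0] g ↔ ∃ c₁ c₂ δ : ℝ, 0 < c₁ ∧ 0 < c₂ ∧ 0 < δ ∧
      ∀ t, |t| < δ → c₁ * g t ≤ f t ∧ f t ≤ c₂ * g t := by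
  rw [IsTheta, isBigO_iff' (f := f), isBigO_iff'' (f := g)]
  simp only [Real.norm_of_nonneg (hf _), Real.norm_of_nonneg (hg _)]
  constructor
  · rintro ⟨⟨c₂, hc₂, hup⟩, ⟨c₁, hc₁, hlow⟩⟩
    obtain ⟨δ, hδ, h⟩ := Metric.eventually_nhds_iff.1 (hlow.and hup)
    exact ⟨c₁, c₂, δ, hc₁, hc₂, hδ, fun t ht ↦ h (by simpa using ht)⟩
  · rintro ⟨c₁, c₂, δ, hc₁, hc₂, hδ, h⟩
    have hev : ∀ᶠ t in 𝓝 (0 : ℝ), c₁ * g t ≤ f t ∧ f t ≤ c₂ * g t :=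
      Metric.eventually_nhds_iff.2 ⟨δ, hδ, fun t ht ↦ h t (by simpa using ht)⟩
    exact ⟨⟨c₂, hc₂, hev.mono fun _ ↦ And.right⟩, ⟨c₁, hc₁, hev.mono fun _ ↦ And.left⟩⟩

theorem IsTheta.comp_const_mul_abs_pow {h : ℝ → ℝ} {m : ℕ} (hh : h =Θ[𝓝 0] fun s ↦ |s| ^ m)
    {a : ℝ} (ha : a ≠ 0) : (fun t ↦ h (a * t)) =Θ[𝓝 0] fun t ↦ |t| ^ m := by
  have hk : Tendsto (a * ·) (𝓝 0) (𝓝 0) := (continuous_const_mul a).tendsto' 0 0 (mul_zero a)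
  have hscale : (h ∘ (a * ·)) =Θ[𝓝 0] ((|·| ^ m) ∘ (a * ·)) :=
    ⟨hh.1.comp_tendsto hk, hh.2.comp_tendsto hk⟩
  simpa only [Function.comp_def, abs_mul, mul_pow,
    isTheta_const_mul_right (pow_ne_zero m (abs_ne_zero.2 ha))] using hscale

end Asymptotics

open Asymptotics

theorem coarse_symbol_zero_order_general (f q : ℝ → ℝ)
    (hfc : Continuous f) (hqc : Continuous q)
    (hf0 : ∀ x : ℝ, 0 ≤ f x) (hq0 : ∀ x : ℝ, 0 ≤ q x)
    (x0 : ℝ) (m : ℕ)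
    (c₁ c₂ δ : ℝ) (hc₁ : 0 < c₁) (hc₂ : 0 < c₂) (hδ : 0 < δ)
    (hzero : ∀ t : ℝ, |t| < δ →
      c₁ * |t| ^ m ≤ f (x0 + t) ∧ f (x0 + t) ≤ c₂ * |t| ^ m)
    (hqx0 : 0 < q x0)
    (C : ℝ)
    (hqmirror : ∀ t : ℝ, |t| < δ → q (x0 + Real.pi + t) ≤ C * |t| ^ m)
    (ghat : ℝ → ℝ)
    (hghat : ∀ x : ℝ, ghat x = (1 / 2) *
      (q (x / 2) * f (x / 2) + q (x / 2 + Real.pi) * f (x / 2 + Real.pi))) :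
    ∃ c₁' c₂' δ' : ℝ, 0 < c₁' ∧ 0 < c₂' ∧ 0 < δ' ∧
      ∀ t : ℝ, |t| < δ' →
        c₁' * |t| ^ m ≤ ghat (2 * x0 + t) ∧ ghat (2 * x0 + t) ≤ c₂' * |t| ^ m := by
  set A : ℝ → ℝ := fun s ↦ q (x0 + s) * f (x0 + s)
  set B : ℝ → ℝ := fun s ↦ q (x0 + Real.pi + s) * f (x0 + Real.pi + s)
  have hA0 : ∀ s, 0 ≤ A s := fun s ↦ mul_nonneg (hq0 _) (hf0 _)
  have hB0 : ∀ s, 0 ≤ B s := fun s ↦ mul_nonneg (hq0 _) (hf0 _)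
  have hpow0 : ∀ s : ℝ, 0 ≤ |s| ^ m := fun s ↦ by positivity
  have hf : (fun s ↦ f (x0 + s)) =Θ[𝓝 0] fun s ↦ |s| ^ m :=
    (isTheta_nhds_zero_iff (fun _ ↦ hf0 _) hpow0).2 ⟨c₁, c₂, δ, hc₁, hc₂, hδ, hzero⟩
  have hq : (fun s ↦ q (x0 + s)) =Θ[𝓝 0] fun _ ↦ (1 : ℝ) :=
    ((hqc.comp (continuous_const_add x0)).tendsto' 0 (q x0) (by simp)).isTheta_one hqx0.ne'
  have hqπ : (fun s ↦ q (x0 + Real.pi + s)) =O[𝓝 0] fun s ↦ |s| ^ m :=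
    IsBigO.of_bound C <| Metric.eventually_nhds_iff.2 ⟨δ, hδ, fun t ht ↦ by
      simpa [Real.norm_of_nonneg (hq0 _)] using hqmirror t (by simpa using ht)⟩
  have hfπ : (fun s ↦ f (x0 + Real.pi + s)) =O[𝓝 0] fun _ ↦ (1 : ℝ) :=
    ((hfc.comp (continuous_const_add _)).tendsto 0).isBigO_one ℝ
  have hAB : (A + B) =Θ[𝓝 0] fun s ↦ |s| ^ m :=
    IsTheta.add_isBigO_of_nonneg hA0 hB0 (by simpa only [one_mul] using hq.mul hf)
      (by simpa only [mul_one] using hqπ.mul hfπ)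
  have hghat' : ∀ t, ghat (2 * x0 + t) = (1 / 2) * (A + B) (2⁻¹ * t) := fun t ↦ by
    rw [hghat, show (2 * x0 + t) / 2 = x0 + 2⁻¹ * t by ring,
      show x0 + 2⁻¹ * t + Real.pi = x0 + Real.pi + 2⁻¹ * t by ring]
    rfl
  refine (isTheta_nhds_zero_iff (fun t ↦ ?_) hpow0).1 ?_
  · rw [hghat' t]
    exact mul_nonneg (by norm_num) (add_nonneg (hA0 _) (hB0 _))
  · simp_rw [hghat']
    exact (hAB.comp_const_mul_abs_pow (by norm_num)).const_mul_left (by norm_num)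

/-- Coarse symbol zero propagation: if the fine symbol `f` (continuous,
`2π`-periodic, nonnegative) has a zero of exact order `m` at `x⁰`, the product
of the grid transfer symbols `q = r·p` (continuous, `2π`-periodic, nonnegative)
is positive at `x⁰` and is `O(|t|^m)` at the mirror point `x⁰+π`, then the
Galerkin coarse symbol `ĝ(x) = (1/2)(q(x/2)f(x/2) + q(x/2+π)f(x/2+π))` has a
zero of exactly the same order `m` at `2x⁰`. -/
theorem coarse_symbol_zero_order (f q : ℝ → ℝ)
    (hfc : Continuous f) (hqc : Continuous q)
    (hfper : ∀ x : ℝ, f (x + 2 * Real.pi) = f x)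
    (hqper : ∀ x : ℝ, q (x + 2 * Real.pi) = q x)
    (hf0 : ∀ x : ℝ, 0 ≤ f x) (hq0 : ∀ x : ℝ, 0 ≤ q x)
    (x0 : ℝ) (m : ℕ) (hm : 1 ≤ m)
    (c₁ c₂ δ : ℝ) (hc₁ : 0 < c₁) (hc₂ : 0 < c₂) (hδ : 0 < δ)
    (hzero : ∀ t : ℝ, |t| < δ →
      c₁ * |t| ^ m ≤ f (x0 + t) ∧ f (x0 + t) ≤ c₂ * |t| ^ m)
    (hqx0 : 0 < q x0)
    (C : ℝ) (hC : 0 < C)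
    (hqmirror : ∀ t : ℝ, |t| < δ → q (x0 + Real.pi + t) ≤ C * |t| ^ m)
    (ghat : ℝ → ℝ)
    (hghat : ∀ x : ℝ, ghat x = (1 / 2) *
      (q (x / 2) * f (x / 2) + q (x / 2 + Real.pi) * f (x / 2 + Real.pi))) :
    ∃ c₁' c₂' δ' : ℝ, 0 < c₁' ∧ 0 < c₂' ∧ 0 < δ' ∧
      ∀ t : ℝ, |t| < δ' →
        c₁' * |t| ^ m ≤ ghat (2 * x0 + t) ∧ ghat (2 * x0 + t) ≤ c₂' * |t| ^ m :=
  coarse_symbol_zero_order_general f q hfc hqc hf0 hq0 x0 m c₁ c₂ δ hc₁ hc₂ hδ hzero hqx0 C hqmirror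
    ghat hghat
end

section
/- Define g_c(x) = ((1+cos x)/2)²·(2 − cos x), the symbol of the cubic interpolation. Then: (i) lim_{x→0, x≠0} (g_c(x) − 1)/x⁴ = −3/16, and (ii) lim_{x→0, x≠0} g_c(x+π)/x⁴ = 3/16. (Hence the cubic interpolation grid transfer operator has low frequency order LF = 4 and high frequency order HF = 4.) -/
open Filter Topology Real

/-!
Both `g_c(x) - 1 = -(1 - cos x)² (2 + cos x) / 4` and `g_c(x + π) = (1 - cos x)² (2 + cos x) / 4`
are `(1 - cos x)²` times a function of `cos x` that is continuous at `1`, and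
`1 - cos x = (x² / 2) sinc(x / 2)²` with `sinc` continuous and `sinc 0 = 1`,
so `(1 - cos x)² / x⁴ → 1 / 4`.
-/

theorem one_sub_cos_eq_sq_mul_sinc_sq (x : ℝ) : 1 - cos x = x ^ 2 / 2 * sinc (x / 2) ^ 2 := by
  rcases eq_or_ne x 0 with rfl | hx
  · simp
  have hcos : cos x = 1 - 2 * sin (x / 2) ^ 2 := by
    rw [← mul_div_cancel₀ x two_ne_zero, cos_two_mul, cos_sq']
    ring_nf
  rw [sinc_of_ne_zero (div_ne_zero hx two_ne_zero), hcos]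
  field_simp
  ring

theorem tendsto_one_sub_cos_sq_mul_comp_cos_div_pow_four {q : ℝ → ℝ} (hq : ContinuousAt q 1) :
    Tendsto (fun x => (1 - cos x) ^ 2 * q (cos x) / x ^ 4) (𝓝[≠] 0) (𝓝 (q 1 / 4)) := by
  have hqc : ContinuousAt (fun x => q (cos x)) 0 :=
    ContinuousAt.comp (g := q) (by rwa [cos_zero]) continuous_cos.continuousAt
  have hsinc : ContinuousAt (fun x : ℝ => sinc (x / 2)) 0 :=
    (continuous_sinc.comp (continuous_id.div_const 2)).continuousAt
  have hcont : ContinuousAt (fun x => sinc (x / 2) ^ 4 * q (cos x) / 4) 0 :=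
    ((hsinc.pow 4).mul hqc).div_const 4
  have hlim := hcont.tendsto.mono_left (nhdsWithin_le_nhds (s := {0}ᶜ))
  simp only [zero_div, sinc_zero, one_pow, one_mul, cos_zero] at hlim
  refine hlim.congr' (eventually_nhdsWithin_of_forall fun x (hx : x ≠ 0) => ?_)
  dsimp only
  rw [one_sub_cos_eq_sq_mul_sinc_sq]
  field_simp
  ring

/-- The cubic interpolation symbol `g_c(x) = ((1+cos x)/2)²·(2−cos x)` has
low frequency order `4`, with `(g_c(x) − 1)/x⁴ → −3/16`, and high frequency
order `4`, with `g_c(x+π)/x⁴ → 3/16` as `x → 0`. -/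
theorem cubic_interpolation_orders (gc : ℝ → ℝ)
    (hgc : ∀ x : ℝ, gc x = ((1 + Real.cos x) / 2) ^ 2 * (2 - Real.cos x)) :
    Tendsto (fun x : ℝ => (gc x - 1) / x ^ 4) (𝓝[≠] 0) (𝓝 (-(3 / 16) : ℝ)) ∧
    Tendsto (fun x : ℝ => gc (x + Real.pi) / x ^ 4) (𝓝[≠] 0)
      (𝓝 ((3 / 16 : ℝ))) := by
  have hlow : ContinuousAt (fun c : ℝ => -(2 + c) / 4) 1 := by fun_prop
  have hhigh : ContinuousAt (fun c : ℝ => (2 + c) / 4) 1 := by fun_prop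
  constructor
  · convert (tendsto_one_sub_cos_sq_mul_comp_cos_div_pow_four hlow).congr fun x => ?_ using 2
    · norm_num
    · rw [hgc]; ring
  · convert (tendsto_one_sub_cos_sq_mul_comp_cos_div_pow_four hhigh).congr fun x => ?_ using 2
    · norm_num
    · rw [hgc, cos_add_pi]; ring
end

section
/- Let s ≥ 1 and let r : ℤ → ℝ be finitely supported. Assume the associated restriction leaves all polynomials of degree at most s−1 invariant, in the sense that for every real polynomial q with deg q < s one has Σ_{j∈ℤ} r_j · q(j) = q(0). Then the symbol g(x) = Σ_{j∈ℤ} r_j·e^{−ijx} satisfies g(x) = 1 + O(|x|^s) as x → 0; that is, the restriction has low frequency order at least s. -/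
/-!
The moment conditions `∑ j, r j * j ^ m = 0 ^ m` for `m < s` (reproduction of the monomials)
make the Taylor polynomial of degree `< s` of the symbol identically `1`. Hence `g(x) - 1` is a
finite combination of Taylor remainders `e^{-ijx} - ∑_{m<s} (-ijx)^m / m!`, each `O(|x|^s)`.
-/

open Filter Topology Asymptotics

open Finset Polynomial Complex
open scoped Nat

theorem Complex.exp_mul_sub_sum_range_isBigO_abs_pow (c : ℂ) (n : ℕ) :
    (fun x : ℝ => exp (c * x) - ∑ i ∈ range n, (c * x) ^ i / i !) =O[𝓝 0]
      fun x : ℝ => |x| ^ n := by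
  have hc : Tendsto (fun x : ℝ => c * x) (𝓝 0) (𝓝 0) := by
    simpa using (continuous_ofReal.tendsto 0).const_mul c
  refine ((exp_sub_sum_range_isBigO_pow n).comp_tendsto hc).trans
    (.of_bound (‖c‖ ^ n) (Eventually.of_forall fun x => ?_))
  simp [mul_pow]

def ReproducesPolynomials (r : ℤ → ℝ) (s : ℕ) : Prop :=
  ∀ q : ℝ[X], q.degree < (s : WithBot ℕ) → ∑ᶠ j : ℤ, r j * q.eval (j : ℝ) = q.eval 0

theorem ReproducesPolynomials.sum_mul_pow {r : ℤ → ℝ} {s : ℕ} (h : ReproducesPolynomials r s)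
    {F : Finset ℤ} (hF : Function.support r ⊆ F) {m : ℕ} (hm : m < s) :
    ∑ j ∈ F, r j * (j : ℝ) ^ m = 0 ^ m := by
  have hq := h (X ^ m) (by rw [degree_X_pow]; exact_mod_cast hm)
  simpa [finsum_eq_sum_of_support_subset _ ((Function.support_mul_subset_left _ _).trans hF)]
    using hq

theorem sum_mul_sum_range_pow_div_factorial_eq_one {r : ℤ → ℝ} {s : ℕ} (hs : 1 ≤ s)
    {F : Finset ℤ} (hmom : ∀ m < s, ∑ j ∈ F, r j * (j : ℝ) ^ m = 0 ^ m) (c : ℂ) :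
    ∑ j ∈ F, (r j : ℂ) * ∑ m ∈ range s, (c * j) ^ m / m ! = 1 := by
  calc ∑ j ∈ F, (r j : ℂ) * ∑ m ∈ range s, (c * j) ^ m / m !
      = ∑ m ∈ range s, ((∑ j ∈ F, r j * (j : ℝ) ^ m : ℝ) : ℂ) * (c ^ m / m !) := by
        simp_rw [mul_sum]
        rw [sum_comm]
        push_cast
        simp_rw [sum_mul]
        refine sum_congr rfl fun m _ => sum_congr rfl fun j _ => ?_
        ring
    _ = ∑ m ∈ range s, (0 : ℂ) ^ m * (c ^ m / m !) :=
        sum_congr rfl fun m hm => by rw [hmom m (mem_range.1 hm)]; push_cast; rfl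
    _ = 1 := by
        obtain ⟨s, rfl⟩ := Nat.exists_eq_add_of_le' hs
        simp [sum_range_succ']

/-- If the restriction with finitely supported stencil `r` leaves all
polynomials of degree `< s` invariant (`Σ_j r_j q(j) = q(0)`), then its symbol
`g(x) = Σ_j r_j e^{−ijx}` satisfies `g(x) = 1 + O(|x|^s)` as `x → 0`; that is,
the restriction has low frequency order at least `s`. -/
theorem restriction_polynomial_invariance_LF (s : ℕ) (hs : 1 ≤ s)
    (r : ℤ → ℝ) (hr : (Function.support r).Finite)
    (hpoly : ∀ q : Polynomial ℝ, q.degree < (s : WithBot ℕ) →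
      ∑ᶠ j : ℤ, r j * q.eval (j : ℝ) = q.eval 0) :
    (fun x : ℝ =>
        (∑ᶠ j : ℤ, (r j : ℂ) * Complex.exp (-(Complex.I * j * x))) - 1)
      =O[𝓝[≠] (0 : ℝ)] fun x : ℝ => |x| ^ s := by
  have hF : Function.support r ⊆ hr.toFinset := by simp
  have hsymbol : ∀ x : ℝ, ∑ j ∈ hr.toFinset, (r j : ℂ) *
      (exp (-(I * j) * x) - ∑ m ∈ range s, (-(I * j) * x) ^ m / m !) =
      (∑ᶠ j : ℤ, (r j : ℂ) * exp (-(I * j * x))) - 1 := by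
    intro x
    have hsupp : Function.support (fun j : ℤ => (r j : ℂ) * exp (-(I * j * x))) ⊆ hr.toFinset :=
      (Function.support_mul_subset_left _ _).trans (by simp)
    rw [finsum_eq_sum_of_support_subset _ hsupp, ← sum_mul_sum_range_pow_div_factorial_eq_one hs
      (fun m hm => ReproducesPolynomials.sum_mul_pow hpoly hF hm) (-(I * x)), ← sum_sub_distrib]
    refine sum_congr rfl fun j _ => ?_
    ring_nf
  exact ((IsBigO.fun_sum fun j _ => (exp_mul_sub_sum_range_isBigO_abs_pow _ s).const_mul_left
    (r j : ℂ)).congr_left hsymbol).mono nhdsWithin_le_nhds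
end
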